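/- Bound transfer theorem (upper bound direction): Let κ(x,x') be a symmetric kernel such that for every fixed x, the variance of κ(x, X') over a random data point X' is at most F(n). Then the total variance over two independent random data points satisfies Var_{X,X'}[κ(X,X')] ≤ 2F(n). Consequently, if F(n) ∈ O(1/bⁿ) with b > 1 (barren-plateau regime of the associated variational cost), the kernel exhibits exponential concentration. -/

import Mathlib

open MeasureTheory ProbabilityTheory Filter Asymptotics

section Aux

variable {𝒳 : Type*} [MeasurableSpace 𝒳]

private lemma integrable_of_bdd {μ : Measure 𝒳} [IsFiniteMeasure μ] {f : 𝒳 → ℝ}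
    (hf : AEStronglyMeasurable f μ) {C : ℝ} (h : ∀ x, |f x| ≤ C) : Integrable f μ :=
  (memLp_of_bounded (ae_of_all _ fun x => Set.mem_Icc.2 (abs_le.1 (h x))) hf 1).integrable le_rfl

private lemma memL2_of_bdd {μ : Measure 𝒳} [IsFiniteMeasure μ] {f : 𝒳 → ℝ}
    (hf : AEStronglyMeasurable f μ) {C : ℝ} (h : ∀ x, |f x| ≤ C) : MemLp f 2 μ :=
  memLp_of_bounded (ae_of_all _ fun x => Set.mem_Icc.2 (abs_le.1 (h x))) hf 2

private lemma sq_bdd {a D : ℝ} (h : |a| ≤ D) : |a ^ 2| ≤ D ^ 2 := by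
  rw [abs_pow]; exact pow_le_pow_left₀ (abs_nonneg _) h 2

/-- Jensen: the square of the mean is at most the mean of the square. -/
private lemma sq_integral_le {μ : Measure 𝒳} [IsProbabilityMeasure μ] {f : 𝒳 → ℝ}
    (hf : Measurable f) {C : ℝ} (h : ∀ x, |f x| ≤ C) :
    (∫ x, f x ∂μ) ^ 2 ≤ ∫ x, (f x) ^ 2 ∂μ := by
  have hm : MemLp f 2 μ := memL2_of_bdd hf.aestronglyMeasurable h
  have := variance_nonneg f μ
  rw [variance_eq_sub hm] at this
  have heq : (∫ x, (f ^ 2) x ∂μ) = ∫ x, (f x) ^ 2 ∂μ := by simp [Pi.pow_apply]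
  linarith [this, heq ▸ this]

private lemma key_bound (ν : Measure 𝒳) [IsProbabilityMeasure ν]
    (k : 𝒳 → 𝒳 → ℝ) (hm : Measurable (Function.uncurry k))
    {C : ℝ} (hC : ∀ x y, |k x y| ≤ C)
    (hs : ∀ x y, k x y = k y x)
    {F : ℝ} (hF0 : 0 ≤ F)
    (hcond : ∀ x, variance (fun y => k x y) ν ≤ F) :
    variance (fun p : 𝒳 × 𝒳 => k p.1 p.2) (ν.prod ν) ≤ 2 * F := by
  have : Nonempty 𝒳 := Measure.nonempty_of_neZero ν
  have hC0 : 0 ≤ C := le_trans (abs_nonneg _) (hC Classical.ofNonempty Classical.ofNonempty)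
  -- g x = ∫ y, k x y
  set g : 𝒳 → ℝ := fun x => ∫ y, k x y ∂ν with hg
  have hkx_meas : ∀ x, Measurable (fun y => k x y) :=
    fun x => hm.comp measurable_prodMk_left
  have hg_meas : Measurable g := by
    have := hm.stronglyMeasurable.integral_prod_right' (ν := ν)
    exact this.measurable
  have hg_bd : ∀ x, |g x| ≤ C := fun x => by
    rw [← Real.norm_eq_abs]
    calc ‖∫ y, k x y ∂ν‖ ≤ C * (ν Set.univ).toReal :=
          norm_integral_le_of_norm_le_const (ae_of_all _ fun y => by
            rw [Real.norm_eq_abs]; exact hC x y)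
      _ = C := by simp
  -- norm bound for integrals over a probability measure
  have norm_int : ∀ {f : 𝒳 → ℝ} {D : ℝ}, (∀ x, |f x| ≤ D) → |∫ x, f x ∂ν| ≤ D := by
    intro f D hf
    rw [← Real.norm_eq_abs]
    calc ‖∫ x, f x ∂ν‖ ≤ D * (ν Set.univ).toReal :=
          norm_integral_le_of_norm_le_const (ae_of_all _ fun x => by
            rw [Real.norm_eq_abs]; exact hf x)
      _ = D := by simp
  -- boundedness of various auxiliary functions
  have hd_bd : ∀ x y, |k x y - g y| ≤ C + C := fun x y =>
    (abs_sub _ _).trans (add_le_add (hC x y) (hg_bd y))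
  have hm' : Measurable (fun p : 𝒳 × 𝒳 => k p.1 p.2) := hm
  have hd_meas : Measurable (fun p : 𝒳 × 𝒳 => k p.1 p.2 - g p.2) :=
    hm'.sub (hg_meas.comp measurable_snd)
  have hd2_meas : Measurable (fun p : 𝒳 × 𝒳 => (k p.1 p.2 - g p.2) ^ 2) :=
    hd_meas.pow_const 2
  -- MemLp and integrability facts
  have hkL2 : MemLp (fun p : 𝒳 × 𝒳 => k p.1 p.2) 2 (ν.prod ν) :=
    memL2_of_bdd hm'.aestronglyMeasurable (fun p => hC p.1 p.2)
  have hgL2 : MemLp g 2 ν := memL2_of_bdd hg_meas.aestronglyMeasurable hg_bd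
  have hkxL2 : ∀ x, MemLp (fun y => k x y) 2 ν :=
    fun x => memL2_of_bdd (hkx_meas x).aestronglyMeasurable (hC x)
  have hint_k : Integrable (Function.uncurry k) (ν.prod ν) :=
    integrable_of_bdd hm.aestronglyMeasurable (fun p => hC p.1 p.2)
  have hint_k2 : Integrable (Function.uncurry fun x y => (k x y) ^ 2) (ν.prod ν) := by
    exact integrable_of_bdd (hm'.pow_const 2).aestronglyMeasurable (C := C ^ 2)
      fun p => sq_bdd (hC p.1 p.2)
  have hint_d2 : Integrable (Function.uncurry fun x y => (k x y - g y) ^ 2) (ν.prod ν) := by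
    exact integrable_of_bdd hd2_meas.aestronglyMeasurable (C := (C + C) ^ 2)
      fun p => sq_bdd (hd_bd p.1 p.2)
  have hint_g : Integrable g ν := integrable_of_bdd hg_meas.aestronglyMeasurable hg_bd
  have hint_g2 : Integrable (fun x => (g x) ^ 2) ν := by
    exact integrable_of_bdd ((hg_meas.pow_const 2).aestronglyMeasurable) (C := C ^ 2)
      fun x => sq_bdd (hg_bd x)
  -- h(x) = ∫ y, (k x y)^2
  have hh_meas : Measurable (fun x => ∫ y, (k x y) ^ 2 ∂ν) := by
    have := (hm'.pow_const 2).stronglyMeasurable.integral_prod_right' (ν := ν)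
    exact this.measurable
  have hh_bd : ∀ x, |∫ y, (k x y) ^ 2 ∂ν| ≤ C ^ 2 := fun x =>
    norm_int fun y => sq_bdd (hC x y)
  have hint_h : Integrable (fun x => ∫ y, (k x y) ^ 2 ∂ν) ν :=
    integrable_of_bdd hh_meas.aestronglyMeasurable hh_bd
  -- total mean and mean of squares
  set I : ℝ := ∫ x, g x ∂ν with hI
  have hI_bd : |I| ≤ C := norm_int hg_bd
  have hmean_eq : ∫ p : 𝒳 × 𝒳, k p.1 p.2 ∂(ν.prod ν) = I := (integral_integral hint_k).symm
  have hsq_eq : ∫ p : 𝒳 × 𝒳, (k p.1 p.2) ^ 2 ∂(ν.prod ν) = ∫ x, ∫ y, (k x y) ^ 2 ∂ν ∂ν :=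
    (integral_integral hint_k2).symm
  -- Step 1 : ∫ₓ (∫ᵧ k² - g²) ≤ F
  have step1 : ∫ x, ∫ y, (k x y) ^ 2 ∂ν ∂ν - ∫ x, (g x) ^ 2 ∂ν ≤ F := by
    rw [← integral_sub hint_h hint_g2]
    calc ∫ x, (∫ y, (k x y) ^ 2 ∂ν - (g x) ^ 2) ∂ν
        ≤ ∫ _x, F ∂ν := by
          refine integral_mono (hint_h.sub hint_g2) (integrable_const F) fun x => ?_
          have := hcond x
          rw [variance_eq_sub (hkxL2 x)] at this
          simpa [hg] using this
      _ = F := by simp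
  -- Step 2 : variance g ν ≤ F
  have step2 : variance g ν ≤ F := by
    have hvg : variance g ν = ∫ x, (g x - I) ^ 2 ∂ν := by
      rw [variance_eq_integral hgL2.1.aemeasurable]
    -- pointwise Jensen
    have hpt : ∀ x, (g x - I) ^ 2 ≤ ∫ y, (k x y - g y) ^ 2 ∂ν := by
      intro x
      have he : g x - I = ∫ y, (k x y - g y) ∂ν := by
        rw [integral_sub (integrable_of_bdd (hkx_meas x).aestronglyMeasurable (hC x)) hint_g]
      rw [he]
      exact sq_integral_le ((hkx_meas x).sub hg_meas) (fun y => hd_bd x y)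
    -- integrability of the outer integrands
    have hout_meas : Measurable (fun x => ∫ y, (k x y - g y) ^ 2 ∂ν) := by
      have := hd2_meas.stronglyMeasurable.integral_prod_right' (ν := ν)
      exact this.measurable
    have hout_bd : ∀ x, |∫ y, (k x y - g y) ^ 2 ∂ν| ≤ (C + C) ^ 2 := fun x =>
      norm_int fun y => sq_bdd (hd_bd x y)
    have hout_int : Integrable (fun x => ∫ y, (k x y - g y) ^ 2 ∂ν) ν :=
      integrable_of_bdd hout_meas.aestronglyMeasurable hout_bd
    have hgI_int : Integrable (fun x => (g x - I) ^ 2) ν := by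
      exact integrable_of_bdd (((hg_meas.sub measurable_const).pow_const 2).aestronglyMeasurable)
        (C := (C + C) ^ 2)
        fun x => sq_bdd ((abs_sub _ _).trans (add_le_add (hg_bd x) hI_bd))
    have hswap : ∫ x, ∫ y, (k x y - g y) ^ 2 ∂ν ∂ν
        = ∫ y, ∫ x, (k x y - g y) ^ 2 ∂ν ∂ν := integral_integral_swap hint_d2
    -- inner integral equals the conditional variance
    have hinner : ∀ y, ∫ x, (k x y - g y) ^ 2 ∂ν ≤ F := by
      intro y
      have hfe : (fun x => k x y) = fun x => k y x := funext fun x => hs x y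
      have hmean : ∫ x, k x y ∂ν = g y := by
        rw [hg]; exact integral_congr_ae (ae_of_all _ fun x => hs x y)
      have hky2 : MemLp (fun x => k x y) 2 ν :=
        memL2_of_bdd ((hm.comp (measurable_prodMk_right)).aestronglyMeasurable)
          (fun x => hC x y)
      have hveq : variance (fun x => k x y) ν = ∫ x, (k x y - g y) ^ 2 ∂ν := by
        rw [variance_eq_integral hky2.1.aemeasurable]
        simp [Pi.pow_apply, Pi.sub_apply, hmean]
      rw [← hveq, hfe]
      exact hcond y
    have hswap_meas : Measurable (fun y => ∫ x, (k x y - g y) ^ 2 ∂ν) := by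
      have := hd2_meas.stronglyMeasurable.integral_prod_left' (μ := ν)
      exact this.measurable
    have hswap_bd : ∀ y, |∫ x, (k x y - g y) ^ 2 ∂ν| ≤ (C + C) ^ 2 := fun y =>
      norm_int fun x => sq_bdd (hd_bd x y)
    have hswap_int : Integrable (fun y => ∫ x, (k x y - g y) ^ 2 ∂ν) ν :=
      integrable_of_bdd hswap_meas.aestronglyMeasurable hswap_bd
    calc variance g ν = ∫ x, (g x - I) ^ 2 ∂ν := hvg
      _ ≤ ∫ x, ∫ y, (k x y - g y) ^ 2 ∂ν ∂ν :=
          integral_mono hgI_int hout_int hpt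
      _ = ∫ y, ∫ x, (k x y - g y) ^ 2 ∂ν ∂ν := hswap
      _ ≤ ∫ _y, F ∂ν := integral_mono hswap_int (integrable_const F) hinner
      _ = F := by simp
  -- Combine
  have hvar_total : variance (fun p : 𝒳 × 𝒳 => k p.1 p.2) (ν.prod ν)
      = ∫ x, ∫ y, (k x y) ^ 2 ∂ν ∂ν - I ^ 2 := by
    rw [variance_eq_sub hkL2]
    simp only [Pi.pow_apply]
    rw [hmean_eq, ← hsq_eq]
  have hvarg : variance g ν = ∫ x, (g x) ^ 2 ∂ν - I ^ 2 := by
    rw [variance_eq_sub hgL2]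
    simp [Pi.pow_apply, hI]
  rw [hvar_total]
  linarith [step1, step2, hvarg ▸ step2]

end Aux

/-- Bound transfer theorem (upper bound direction): if, for every number of
qubits `n`, the symmetric kernel `κ n` has all conditional variances bounded by `F n` (the
barren-plateau bound of the associated variational cost), then the total variance over two
i.i.d. data points is at most `2 * F n`; consequently, if `F ∈ O((1/b)ⁿ)` with `b > 1`, the
kernel variance is `O((1/b)ⁿ)`, i.e. the kernel exhibits exponential concentration. -/
theorem bound_transfer_upper
    {𝒳 : Type*} [MeasurableSpace 𝒳]
    (μ : ℕ → Measure 𝒳) [∀ n, IsProbabilityMeasure (μ n)]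
    (κ : ℕ → 𝒳 → 𝒳 → ℝ)
    (hmeas : ∀ n, Measurable (Function.uncurry (κ n)))
    (hbdd : ∀ n, ∃ C : ℝ, ∀ x y, |κ n x y| ≤ C)
    (hsymm : ∀ n x y, κ n x y = κ n y x)
    (F : ℕ → ℝ) (hF : ∀ n, 0 ≤ F n)
    (hcond : ∀ n x, variance (fun y => κ n x y) (μ n) ≤ F n) :
    (∀ n, variance (fun p : 𝒳 × 𝒳 => κ n p.1 p.2) ((μ n).prod (μ n)) ≤ 2 * F n)
      ∧ (∀ b : ℝ, 1 < b → (F =O[atTop] fun n => (1 / b) ^ n) →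
          (fun n => variance (fun p : 𝒳 × 𝒳 => κ n p.1 p.2) ((μ n).prod (μ n)))
            =O[atTop] fun n => (1 / b) ^ n) := by
  have main : ∀ n, variance (fun p : 𝒳 × 𝒳 => κ n p.1 p.2) ((μ n).prod (μ n)) ≤ 2 * F n := by
    intro n
    obtain ⟨C, hC⟩ := hbdd n
    exact key_bound (μ n) (κ n) (hmeas n) hC (hsymm n) (hF n) (hcond n)
  refine ⟨main, fun b hb hFO => ?_⟩
  refine (IsBigO.of_bound 2 ?_).trans hFO
  filter_upwards with n
  have h1 := main n
  have h2 := variance_nonneg (fun p : 𝒳 × 𝒳 => κ n p.1 p.2) ((μ n).prod (μ n))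
  rw [Real.norm_eq_abs, Real.norm_eq_abs, abs_of_nonneg h2, abs_of_nonneg (hF n)]
  linarith
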